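/- (Murakami's stability test) Let f : ℝ → ℝ, let x̄ be a fixed point of f (f(x̄) = x̄), and let k ≥ 3 be an odd integer. Suppose f is (2k−1)-times continuously differentiable, f′(x̄) = −1, the j-th derivative of f at x̄ vanishes for every j with 2 ≤ j ≤ k−1, and the k-th derivative of f at x̄ is strictly positive. Then x̄ is asymptotically stable: there exists δ > 0 such that for every x₀ with |x₀ − x̄| < δ, the sequence of iterates f^[n](x₀) converges to x̄ as n → ∞. -/

import Mathlib

/-!
Write `x = xbar + u`. Since the Taylor polynomial of `f` at `xbar` is `xbar - u` up to order
`k - 1`, Lagrange's remainder gives `f x - xbar = -u + c u ^ k` with `c` close to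
`f⁽ᵏ⁾(xbar) / k! > 0`. As `k` is odd, `u ^ k` has the sign of `u`, so near `xbar`
`|f x - xbar| = |u| - c |u| ^ k ≤ |u| - a |u| ^ k` for some `a > 0`. The distances of the iterates
to `xbar` therefore decrease to a limit `L` with `L ≤ L - a L ^ k`, that is `L = 0`.
-/

open Filter Set Topology Nat

theorem exists_eq_add_deriv_mul_add_iteratedDeriv_mul_pow {f : ℝ → ℝ} {x₀ x : ℝ} {n : ℕ}
    (hn : 2 ≤ n) (hf : ContDiff ℝ n f)
    (hvanish : ∀ j, 2 ≤ j → j < n → iteratedDeriv j f x₀ = 0) (hx : x₀ ≠ x) :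
    ∃ ξ ∈ uIoo x₀ x,
      f x = f x₀ + deriv f x₀ * (x - x₀) + iteratedDeriv n f ξ * (x - x₀) ^ n / n ! := by
  obtain ⟨m, rfl⟩ : ∃ m, n = m + 2 := ⟨n - 2, by omega⟩
  have hderiv (j : ℕ) (hj : j ≤ m + 1) :
      iteratedDerivWithin j f (uIcc x₀ x) x₀ = iteratedDeriv j f x₀ :=
    iteratedDerivWithin_eq_iteratedDeriv (uniqueDiffOn_uIcc hx)
      ((hf.of_le (by exact_mod_cast hj.step)).contDiffAt) left_mem_uIcc
  have htaylor : taylorWithinEval f (m + 1) (uIcc x₀ x) x₀ x = f x₀ + deriv f x₀ * (x - x₀) := by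
    rw [taylor_within_apply, Finset.sum_range_succ', Finset.sum_range_succ',
      Finset.sum_eq_zero fun i hi => by
        rw [hderiv _ (by simp at hi; omega), hvanish _ le_add_self (by simp at hi; omega),
          smul_zero]]
    simp only [zero_add, factorial_zero, factorial_one, cast_one, inv_one, pow_zero, pow_one,
      one_mul, mul_one, smul_eq_mul, iteratedDerivWithin_zero, hderiv 1 (by omega),
      iteratedDeriv_one]
    ring
  obtain ⟨ξ, hξ, H⟩ := taylor_mean_remainder_lagrange_iteratedDeriv hx hf.contDiffOn
  exact ⟨ξ, hξ, by rw [htaylor] at H; linarith⟩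

theorem abs_neg_add_mul_pow_of_odd {u c : ℝ} {k : ℕ} (hk : Odd k)
    (hcu : c * |u| ^ (k - 1) ≤ 1) : |-u + c * u ^ k| = |u| - c * |u| ^ k := by
  obtain ⟨m, rfl⟩ := hk
  have hpow : u ^ (2 * m + 1) = |u| ^ (2 * m) * u := by
    rw [pow_succ, (even_two_mul m).pow_abs]
  rw [hpow, show -u + c * (|u| ^ (2 * m) * u) = -((1 - c * |u| ^ (2 * m)) * u) by ring,
    abs_neg, abs_mul, abs_of_nonneg (by simpa using hcu), pow_succ]
  ring

theorem tendsto_zero_of_le_sub_mul_pow {r : ℕ → ℝ} {a : ℝ} {k : ℕ} (ha : 0 < a) (hk : k ≠ 0)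
    (hr₀ : ∀ n, 0 ≤ r n) (hr : ∀ n, r (n + 1) ≤ r n - a * r n ^ k) :
    Tendsto r atTop (𝓝 0) := by
  have hanti : Antitone r := antitone_nat_of_succ_le fun n => by
    nlinarith [hr n, pow_nonneg (hr₀ n) k]
  have hlim := tendsto_atTop_ciInf hanti ⟨0, by rintro _ ⟨n, rfl⟩; exact hr₀ n⟩
  set L := ⨅ n, r n
  have hL : L ≤ L - a * L ^ k :=
    le_of_tendsto_of_tendsto' (hlim.comp (tendsto_add_atTop_nat 1))
      (hlim.sub (tendsto_const_nhds.mul (hlim.pow k))) hr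
  have hLk : L ^ k = 0 := le_antisymm (by nlinarith) (pow_nonneg (le_ciInf hr₀) k)
  rw [pow_eq_zero_iff hk] at hLk
  rwa [hLk] at hlim

theorem tendsto_iterate_of_dist_le_sub_mul_pow {X : Type*} [PseudoMetricSpace X] {f : X → X}
    {p : X} {a δ : ℝ} {k : ℕ} (ha : 0 < a) (hk : k ≠ 0)
    (hf : ∀ x, dist x p ≤ δ → dist (f x) p ≤ dist x p - a * dist x p ^ k)
    {x₀ : X} (hx₀ : dist x₀ p ≤ δ) : Tendsto (fun n => f^[n] x₀) atTop (𝓝 p) := by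
  have hstep (n : ℕ) (hn : dist (f^[n] x₀) p ≤ δ) :
      dist (f^[n + 1] x₀) p ≤ dist (f^[n] x₀) p - a * dist (f^[n] x₀) p ^ k := by
    rw [Function.iterate_succ_apply']
    exact hf _ hn
  have hδ (n : ℕ) : dist (f^[n] x₀) p ≤ δ := by
    induction n with
    | zero => exact hx₀
    | succ n ih => nlinarith [hstep n ih, pow_nonneg (dist_nonneg (x := f^[n] x₀) (y := p)) k]
  exact tendsto_iff_dist_tendsto_zero.2 <|
    tendsto_zero_of_le_sub_mul_pow ha hk (fun _ => dist_nonneg) fun n => hstep n (hδ n)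

theorem exists_abs_sub_le_sub_mul_pow_of_deriv_eq_neg_one {f : ℝ → ℝ} {xbar : ℝ} {k : ℕ}
    (hk : 2 ≤ k) (hk_odd : Odd k) (hf : ContDiff ℝ k f) (hfix : f xbar = xbar)
    (hd₁ : deriv f xbar = -1) (hvanish : ∀ j, 2 ≤ j → j < k → iteratedDeriv j f xbar = 0)
    (hdk : 0 < iteratedDeriv k f xbar) :
    ∃ a > 0, ∃ δ > 0, ∀ x, |x - xbar| ≤ δ → |f x - xbar| ≤ |x - xbar| - a * |x - xbar| ^ k := by
  set c : ℝ → ℝ := fun y => iteratedDeriv k f y / (k ! : ℝ)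
  have hc : Continuous c := (hf.continuous_iteratedDeriv k le_rfl).div_const _
  have hc₀ : 0 < c xbar := by positivity
  have hsmall : Tendsto (fun y => 2 * c xbar * |y - xbar| ^ (k - 1)) (𝓝 xbar) (𝓝 0) := by
    have hcont : Continuous fun y => 2 * c xbar * |y - xbar| ^ (k - 1) := by fun_prop
    simpa [zero_pow (by omega : k - 1 ≠ 0)] using hcont.tendsto xbar
  have hnear : ∀ᶠ y in 𝓝 xbar,
      c y ∈ Icc (c xbar / 2) (2 * c xbar) ∧ 2 * c xbar * |y - xbar| ^ (k - 1) ≤ 1 :=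
    (hc.continuousAt.eventually (Icc_mem_nhds (by linarith) (by linarith))).and
      (hsmall.eventually (Iic_mem_nhds one_pos))
  obtain ⟨ε, hε, hball⟩ := Metric.eventually_nhds_iff.1 hnear
  refine ⟨c xbar / 2, by positivity, ε / 2, by positivity, fun x hx => ?_⟩
  rcases eq_or_ne xbar x with rfl | hne
  · simp [hfix, zero_pow (by omega : k ≠ 0)]
  obtain ⟨ξ, hξ, hTaylor⟩ := exists_eq_add_deriv_mul_add_iteratedDeriv_mul_pow hk hf hvanish hne
  have hxε : dist x xbar < ε := by rw [Real.dist_eq]; linarith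
  have hξε : dist ξ xbar < ε :=
    (Real.dist_eq _ _ ▸ abs_sub_left_of_mem_uIcc (uIoo_subset_uIcc_self hξ)).trans_lt hxε
  obtain ⟨⟨hcξ_lo, hcξ_hi⟩, -⟩ := hball hξε
  have hcξ : c ξ * |x - xbar| ^ (k - 1) ≤ 1 :=
    (mul_le_mul_of_nonneg_right hcξ_hi (by positivity)).trans (hball hxε).2
  have hrepr : f x - xbar = -(x - xbar) + c ξ * (x - xbar) ^ k := by
    rw [hTaylor, hfix, hd₁]
    ring
  rw [hrepr, abs_neg_add_mul_pow_of_odd hk_odd hcξ]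
  gcongr

theorem murakami_stability (f : ℝ → ℝ) (xbar : ℝ) (k : ℕ)
    (hk3 : 3 ≤ k) (hkodd : Odd k)
    (hf : ContDiff ℝ (2 * k - 1 : ℕ) f)
    (hfix : f xbar = xbar)
    (hd1 : deriv f xbar = -1)
    (hdj : ∀ j : ℕ, 2 ≤ j → j ≤ k - 1 → iteratedDeriv j f xbar = 0)
    (hdk : 0 < iteratedDeriv k f xbar) :
    ∃ δ > 0, ∀ x0 : ℝ, |x0 - xbar| < δ →
      Tendsto (fun n : ℕ => f^[n] x0) atTop (nhds xbar) := by
  have hfk : ContDiff ℝ k f := hf.of_le (by exact_mod_cast (by omega : k ≤ 2 * k - 1))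
  obtain ⟨a, ha, δ, hδ, hcontract⟩ := exists_abs_sub_le_sub_mul_pow_of_deriv_eq_neg_one
    (by omega) hkodd hfk hfix hd1 (fun j hj₂ hjk => hdj j hj₂ (by omega)) hdk
  refine ⟨δ, hδ, fun x0 hx0 => tendsto_iterate_of_dist_le_sub_mul_pow ha (by omega : k ≠ 0)
    (fun x hx => ?_) (Real.dist_eq x0 xbar ▸ hx0.le)⟩
  simp only [Real.dist_eq] at hx ⊢
  exact hcontract x hx
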